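/- Let m, n, q be positive odd integers. Then the series Σ_{k=1}^{∞} 1 / ( Π_{j=0}^{m−1} L_{nk+njq} · Π_{j=m+1}^{2m} L_{nk+njq} ) converges, and its sum equals (1 / L_{mnq}) · Σ_{k=1}^{q} 1 / ( Π_{j=0}^{2m−1} L_{nk+njq} ). -/

import Mathlib

/-! For odd `t`, Binet's formula `L_n = φ ^ n + ψ ^ n` with `φ ψ = -1` gives
`L_{a+2t} = L_{a+t} L_t + L_a`. Take `t = mnq` and `f j = L_{nk+njq}`; then `f (2m) - f 0 = L_t f m`,
so with `P_k = ∏_{j<2m} f j` the `k`-th term equals `(1/P_k - 1/P_{k+q}) / L_t` (the index shift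
`j ↦ j + 1` is `k ↦ k + q`). The series telescopes with step `q`, and `1/P_k → 0`. -/

open Filter Topology

/-- The Lucas numbers: `L 0 = 2`, `L 1 = 1`, `L (n+2) = L (n+1) + L n`. -/
def lucas : ℕ → ℕ
  | 0 => 2
  | 1 => 1
  | n + 2 => lucas (n + 1) + lucas n

open Finset Real goldenRatio

theorem sum_Icc_one_eq_sum_range {M : Type*} [AddCommMonoid M] (f : ℕ → M) (N : ℕ) :
    ∑ k ∈ Icc 1 N, f k = ∑ k ∈ range N, f (k + 1) := by
  rw [range_eq_Ico, sum_Ico_add', Ico_add_one_right_eq_Icc, zero_add]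

theorem sum_range_sub_shift {M : Type*} [AddCommGroup M] (B : ℕ → M) (N q : ℕ) :
    ∑ k ∈ range N, (B k - B (k + q)) = ∑ k ∈ range q, B k - ∑ k ∈ range q, B (N + k) := by
  rw [sum_sub_distrib, sub_eq_sub_iff_add_eq_add, ← sum_range_add]
  simp only [add_comm _ q, ← sum_range_add]

theorem tendsto_sum_Icc_sub_shift {M : Type*} [AddCommGroup M] [TopologicalSpace M]
    [IsTopologicalAddGroup M] {B : ℕ → M} (hB : Tendsto B atTop (𝓝 0)) (q : ℕ) :
    Tendsto (fun N => ∑ k ∈ Icc 1 N, (B k - B (k + q))) atTop (𝓝 (∑ k ∈ Icc 1 q, B k)) := by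
  have htail : Tendsto (fun N => ∑ k ∈ range q, B (N + k + 1)) atTop (𝓝 0) := by
    simpa only [add_assoc, sum_const_zero, Function.comp_def] using
      tendsto_finsetSum (range q) fun k _ => hB.comp (tendsto_add_atTop_nat (k + 1))
  have hsum (N : ℕ) : ∑ k ∈ Icc 1 N, (B k - B (k + q)) =
      ∑ k ∈ range q, B (k + 1) - ∑ k ∈ range q, B (N + k + 1) := by
    rw [sum_Icc_one_eq_sum_range, ← sum_range_sub_shift (fun k => B (k + 1))]
    simp only [add_right_comm _ q 1]
  simp only [hsum, sum_Icc_one_eq_sum_range]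
  simpa using tendsto_const_nhds.sub htail

theorem one_div_prod_skip_middle {K : Type*} [Field K] {f : ℕ → K} (hf : ∀ j, f j ≠ 0)
    {c : K} (hc : c ≠ 0) {m : ℕ} (hrel : f (2 * m) = f m * c + f 0) :
    1 / ((∏ j ∈ range m, f j) * ∏ j ∈ Icc (m + 1) (2 * m), f j) =
      1 / c * (1 / ∏ j ∈ range (2 * m), f j - 1 / ∏ j ∈ range (2 * m), f (j + 1)) := by
  set F := ∏ j ∈ range (2 * m + 1), f j with hF_def
  have hF : F ≠ 0 := prod_ne_zero_iff.mpr fun j _ => hf j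
  have h₁ : ∏ j ∈ range (2 * m), f j = F / f (2 * m) := by
    rw [eq_div_iff (hf _), hF_def, prod_range_succ]
  have h₂ : ∏ j ∈ range (2 * m), f (j + 1) = F / f 0 := by
    rw [eq_div_iff (hf _), hF_def, prod_range_succ']
  have h₃ : (∏ j ∈ range m, f j) * ∏ j ∈ Icc (m + 1) (2 * m), f j = F / f m := by
    rw [← Ico_add_one_right_eq_Icc, eq_div_iff (hf m), mul_right_comm, ← prod_range_succ,
      prod_range_mul_prod_Ico _ (by omega)]
  rw [h₁, h₂, h₃]
  field_simp
  linear_combination -hrel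

theorem lucas_eq_goldenRatio_pow_add : ∀ n, (lucas n : ℝ) = φ ^ n + ψ ^ n
  | 0 => by norm_num [lucas]
  | 1 => by simp [lucas, goldenRatio_add_goldenConj]
  | n + 2 => by
    rw [lucas, Nat.cast_add, lucas_eq_goldenRatio_pow_add (n + 1), lucas_eq_goldenRatio_pow_add n]
    linear_combination (-φ ^ n) * goldenRatio_sq - ψ ^ n * goldenConj_sq

theorem lucas_add_mul_lucas (a t : ℕ) :
    (lucas (a + t) : ℝ) * lucas t = lucas (a + 2 * t) + (-1) ^ t * lucas a := by
  have h : (φ * ψ) ^ t = (-1) ^ t := by rw [goldenRatio_mul_goldenConj]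
  simp only [lucas_eq_goldenRatio_pow_add]
  generalize φ = x, ψ = y at h ⊢
  linear_combination (x ^ a + y ^ a) * h

theorem lucas_add_two_mul_of_odd {t : ℕ} (ht : Odd t) (a : ℕ) :
    (lucas (a + 2 * t) : ℝ) = lucas (a + t) * lucas t + lucas a := by
  rw [lucas_add_mul_lucas, ht.neg_one_pow]
  ring

theorem lucas_pos : ∀ n, 0 < lucas n
  | 0 => by decide
  | 1 => by decide
  | n + 2 => Nat.add_pos_left (lucas_pos (n + 1)) _

theorem le_lucas : ∀ n, n ≤ lucas n
  | 0 => by decide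
  | 1 => by decide
  | n + 2 => by
    have := le_lucas (n + 1)
    have := lucas_pos n
    rw [lucas]
    omega

theorem lucas_cast_ne_zero (n : ℕ) : (lucas n : ℝ) ≠ 0 :=
  Nat.cast_ne_zero.mpr (lucas_pos n).ne'

theorem tendsto_one_div_prod_lucas {r n : ℕ} (hr : 0 < r) (hn : 0 < n) (q : ℕ) :
    Tendsto (fun k : ℕ => 1 / ∏ j ∈ range r, (lucas (n * k + n * j * q) : ℝ)) atTop (𝓝 0) := by
  have hprod : Tendsto (fun k => ∏ j ∈ range r, lucas (n * k + n * j * q)) atTop atTop := by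
    refine tendsto_atTop_mono (fun k => ?_) tendsto_id
    calc k ≤ n * k := Nat.le_mul_of_pos_left k hn
      _ ≤ lucas (n * k + n * 0 * q) := by simpa using le_lucas (n * k)
      _ ≤ _ := single_le_prod' (f := fun j => lucas (n * k + n * j * q)) (fun j _ => lucas_pos _)
        (mem_range.mpr hr)
  simpa [Nat.cast_prod, Function.comp_def] using
    tendsto_inv_atTop_zero.comp ((tendsto_natCast_atTop_atTop (R := ℝ)).comp hprod)

theorem stmt_11_general (m n q : ℕ) (hm : Odd m) (hn : Odd n) (hq : Odd q) :
    Tendsto (fun N => ∑ k ∈ Finset.Icc 1 N,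
        (1 : ℝ) / ((∏ j ∈ Finset.range m, (lucas (n * k + n * j * q) : ℝ)) *
          ∏ j ∈ Finset.Icc (m + 1) (2 * m), (lucas (n * k + n * j * q) : ℝ)))
      atTop
      (𝓝 ((1 / (lucas (m * n * q) : ℝ)) *
        ∑ k ∈ Finset.Icc 1 q,
          (1 : ℝ) / ∏ j ∈ Finset.range (2 * m), (lucas (n * k + n * j * q) : ℝ))) := by
  set B : ℕ → ℝ := fun k => 1 / ∏ j ∈ range (2 * m), (lucas (n * k + n * j * q) : ℝ)
  have hterm (k : ℕ) :
      1 / ((∏ j ∈ range m, (lucas (n * k + n * j * q) : ℝ)) *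
          ∏ j ∈ Icc (m + 1) (2 * m), (lucas (n * k + n * j * q) : ℝ)) =
        1 / (lucas (m * n * q) : ℝ) * (B k - B (k + q)) := by
    have hrel := lucas_add_two_mul_of_odd ((hm.mul hn).mul hq) (n * k)
    have hshift (j : ℕ) : n * (k + q) + n * j * q = n * k + n * (j + 1) * q := by ring
    simp only [B, hshift]
    refine one_div_prod_skip_middle (fun j => lucas_cast_ne_zero _) (lucas_cast_ne_zero _) ?_
    rw [show n * k + n * (2 * m) * q = n * k + 2 * (m * n * q) by ring,
      show n * k + n * m * q = n * k + m * n * q by ring, mul_zero, zero_mul, add_zero]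
    exact hrel
  simp only [hterm, ← mul_sum]
  have hB : Tendsto B atTop (𝓝 0) :=
    tendsto_one_div_prod_lucas (Nat.mul_pos two_pos hm.pos) hn.pos q
  exact (tendsto_sum_Icc_sub_shift hB q).const_mul _

/-- Theorem (`m`, `n`, `q` odd):
`Σ_{k=1}^{∞} 1/(Π_{j=0}^{m−1} L_{nk+njq} · Π_{j=m+1}^{2m} L_{nk+njq})
  = (1/L_{mnq}) Σ_{k=1}^{q} 1/(Π_{j=0}^{2m−1} L_{nk+njq})`. -/
theorem stmt_11 (m n q : ℕ) (hm : Odd m) (hn : Odd n) (hq : Odd q)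
    (hm' : 0 < m) (hn' : 0 < n) (hq' : 0 < q) :
    Tendsto (fun N => ∑ k ∈ Finset.Icc 1 N,
        (1 : ℝ) / ((∏ j ∈ Finset.range m, (lucas (n * k + n * j * q) : ℝ)) *
          ∏ j ∈ Finset.Icc (m + 1) (2 * m), (lucas (n * k + n * j * q) : ℝ)))
      atTop
      (𝓝 ((1 / (lucas (m * n * q) : ℝ)) *
        ∑ k ∈ Finset.Icc 1 q,
          (1 : ℝ) / ∏ j ∈ Finset.range (2 * m), (lucas (n * k + n * j * q) : ℝ))) :=
  stmt_11_general m n q hm hn hq
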